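/- (Proposition 1, second equation.) Let r : ℝ × ℂ → ℝ be smooth and satisfy ∂r/∂t = Δr + 2r, and set F = ½(1+|ξ|²)² ∂̄r, χ²(t,ξ) = 4|F(t,ξ)|²/(1+|ξ|²)², ρ = ½Δr, and σ = −conj(∂̄F), all derivatives in the ξ variable. Then the squared perpendicular distance function of the normal lines evolves by ∂(χ²)/∂t − Δ(χ²) = 2χ² − 4(ρ² + |σ|²). -/

import Mathlib

open Complex

/-- Wirtinger derivative `∂f(ξ) = ½(Df(ξ)[1] − i·Df(ξ)[i])`, with `Df` the real Fréchet
derivative. -/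
noncomputable def wD (f : ℂ → ℂ) (ξ : ℂ) : ℂ :=
  (1 / 2 : ℂ) * (fderiv ℝ f ξ 1 - Complex.I * fderiv ℝ f ξ Complex.I)

/-- Wirtinger derivative `∂̄f(ξ) = ½(Df(ξ)[1] + i·Df(ξ)[i])`, with `Df` the real Fréchet
derivative. -/
noncomputable def wDbar (f : ℂ → ℂ) (ξ : ℂ) : ℂ :=
  (1 / 2 : ℂ) * (fderiv ℝ f ξ 1 + Complex.I * fderiv ℝ f ξ Complex.I)

/-- The spherical Laplacian in the stereographic coordinate: `Δf(ξ) = (1+|ξ|²)² ∂∂̄f(ξ)`. -/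
noncomputable def sphLap (f : ℂ → ℂ) (ξ : ℂ) : ℂ :=
  (1 + (normSq ξ : ℂ)) ^ 2 * wD (wDbar f) ξ

section basic
variable {f g : ℂ → ℂ} {ξ : ℂ}

lemma fderiv_ofReal_comp (h : ℂ → ℝ) (hg : DifferentiableAt ℝ h ξ) (v : ℂ) :
    fderiv ℝ (fun w => (h w : ℂ)) ξ v = ((fderiv ℝ h ξ v : ℝ) : ℂ) := by
  have := (Complex.ofRealCLM.hasFDerivAt.comp ξ hg.hasFDerivAt).fderiv
  rw [show (fun w => (h w : ℂ)) = (Complex.ofRealCLM ∘ h) from rfl, this]; rfl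

lemma fderiv_conj_comp (hf : DifferentiableAt ℝ f ξ) (v : ℂ) :
    fderiv ℝ (fun w => (starRingEnd ℂ) (f w)) ξ v = (starRingEnd ℂ) (fderiv ℝ f ξ v) := by
  have := ((Complex.conjCLE.toContinuousLinearMap).hasFDerivAt.comp ξ hf.hasFDerivAt).fderiv
  rw [show (fun w => (starRingEnd ℂ) (f w)) = ((Complex.conjCLE.toContinuousLinearMap : ℂ → ℂ) ∘ f) from rfl, this]
  rfl

lemma wD_conj (hf : DifferentiableAt ℝ f ξ) :
    wD (fun w => (starRingEnd ℂ) (f w)) ξ = (starRingEnd ℂ) (wDbar f ξ) := by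
  unfold wD wDbar
  rw [fderiv_conj_comp hf, fderiv_conj_comp hf]
  simp [map_add, map_mul, map_sub, map_ofNat, Complex.conj_I]
  ring

lemma wDbar_conj (hf : DifferentiableAt ℝ f ξ) :
    wDbar (fun w => (starRingEnd ℂ) (f w)) ξ = (starRingEnd ℂ) (wD f ξ) := by
  unfold wD wDbar
  rw [fderiv_conj_comp hf, fderiv_conj_comp hf]
  simp [map_add, map_mul, map_sub, map_ofNat, Complex.conj_I]

lemma conj_wDbar_real (h : ℂ → ℝ) (hg : DifferentiableAt ℝ h ξ) :
    (starRingEnd ℂ) (wDbar (fun w => (h w : ℂ)) ξ) = wD (fun w => (h w : ℂ)) ξ := by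
  unfold wD wDbar
  have hd : DifferentiableAt ℝ (fun w => (h w : ℂ)) ξ := Complex.ofRealCLM.differentiable.differentiableAt.comp ξ hg
  rw [fderiv_ofReal_comp h hg, fderiv_ofReal_comp h hg]
  simp [map_add, map_mul, map_ofNat, Complex.conj_I, Complex.conj_ofReal]
  ring

lemma wD_mul (hf : DifferentiableAt ℝ f ξ) (hg : DifferentiableAt ℝ g ξ) :
    wD (fun w => f w * g w) ξ = wD f ξ * g ξ + f ξ * wD g ξ := by
  unfold wD
  rw [fderiv_fun_mul hf hg]
  simp [ContinuousLinearMap.add_apply, ContinuousLinearMap.smul_apply, smul_eq_mul]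
  ring

lemma wDbar_mul (hf : DifferentiableAt ℝ f ξ) (hg : DifferentiableAt ℝ g ξ) :
    wDbar (fun w => f w * g w) ξ = wDbar f ξ * g ξ + f ξ * wDbar g ξ := by
  unfold wDbar
  rw [fderiv_fun_mul hf hg]
  simp [ContinuousLinearMap.add_apply, ContinuousLinearMap.smul_apply, smul_eq_mul]
  ring

lemma wD_add (hf : DifferentiableAt ℝ f ξ) (hg : DifferentiableAt ℝ g ξ) :
    wD (fun w => f w + g w) ξ = wD f ξ + wD g ξ := by
  unfold wD
  rw [fderiv_fun_add hf hg]
  simp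
  ring

lemma wDbar_add (hf : DifferentiableAt ℝ f ξ) (hg : DifferentiableAt ℝ g ξ) :
    wDbar (fun w => f w + g w) ξ = wDbar f ξ + wDbar g ξ := by
  unfold wDbar
  rw [fderiv_fun_add hf hg]
  simp
  ring

lemma wD_const (c : ℂ) : wD (fun _ => c) ξ = 0 := by
  unfold wD; simp

lemma wDbar_const (c : ℂ) : wDbar (fun _ => c) ξ = 0 := by
  unfold wDbar; simp

lemma wD_id : wD (fun w => w) ξ = 1 := by
  unfold wD
  rw [show (fun w : ℂ => w) = id from rfl, fderiv_id]
  simp [Complex.I_mul_I]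
  ring

lemma wDbar_id : wDbar (fun w => w) ξ = 0 := by
  unfold wDbar
  rw [show (fun w : ℂ => w) = id from rfl, fderiv_id]
  simp [Complex.I_mul_I]

end basic


section smooth

lemma top_add_one_le : (((⊤ : ℕ∞) : WithTop ℕ∞) + 1) ≤ ((⊤ : ℕ∞) : WithTop ℕ∞) := by
  simp

variable {E : Type*} [NormedAddCommGroup E] [NormedSpace ℝ E]

lemma contDiff_fderiv_apply {f : E → ℂ} (hf : ContDiff ℝ (⊤ : ℕ∞) f) (v : E) :
    ContDiff ℝ (⊤ : ℕ∞) (fun w => fderiv ℝ f w v) :=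
  (hf.fderiv_right top_add_one_le).clm_apply contDiff_const

lemma contDiff_wD {f : ℂ → ℂ} (hf : ContDiff ℝ (⊤ : ℕ∞) f) : ContDiff ℝ (⊤ : ℕ∞) (wD f) := by
  unfold wD
  exact contDiff_const.mul ((contDiff_fderiv_apply hf 1).sub
    (contDiff_const.mul (contDiff_fderiv_apply hf Complex.I)))

lemma contDiff_wDbar {f : ℂ → ℂ} (hf : ContDiff ℝ (⊤ : ℕ∞) f) : ContDiff ℝ (⊤ : ℕ∞) (wDbar f) := by
  unfold wDbar
  exact contDiff_const.mul ((contDiff_fderiv_apply hf 1).add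
    (contDiff_const.mul (contDiff_fderiv_apply hf Complex.I)))

lemma fderiv_fderiv_apply {f : E → ℂ} (hf : ContDiff ℝ (⊤ : ℕ∞) f) (ξ : E) (u v : E) :
    fderiv ℝ (fun w => fderiv ℝ f w v) ξ u = fderiv ℝ (fderiv ℝ f) ξ u v := by
  have h2 : DifferentiableAt ℝ (fderiv ℝ f) ξ :=
    ((hf.fderiv_right top_add_one_le).differentiable (by simp)).differentiableAt
  have := ((ContinuousLinearMap.apply ℝ ℂ v).hasFDerivAt.comp ξ h2.hasFDerivAt).fderiv
  rw [show (fun w => fderiv ℝ f w v) = ((ContinuousLinearMap.apply ℝ ℂ v : (E →L[ℝ] ℂ) → ℂ) ∘ (fderiv ℝ f)) from rfl,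
    this]
  rfl

lemma fderiv2_symm {f : E → ℂ} (hf : ContDiff ℝ (⊤ : ℕ∞) f) (ξ : E) (u v : E) :
    fderiv ℝ (fun w => fderiv ℝ f w v) ξ u = fderiv ℝ (fun w => fderiv ℝ f w u) ξ v := by
  rw [fderiv_fderiv_apply hf, fderiv_fderiv_apply hf]
  exact (hf.contDiffAt.isSymmSndFDerivAt (by rw [minSmoothness_of_isRCLikeNormedField]; exact WithTop.coe_le_coe.mpr le_top)) u v

end smooth

section comm

lemma fderiv_wDbar {f : ℂ → ℂ} (hf : ContDiff ℝ (⊤ : ℕ∞) f) (ξ v : ℂ) :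
    fderiv ℝ (wDbar f) ξ v
      = (1 / 2 : ℂ) * (fderiv ℝ (fun w => fderiv ℝ f w 1) ξ v
          + Complex.I * fderiv ℝ (fun w => fderiv ℝ f w Complex.I) ξ v) := by
  unfold wDbar
  have h1 : DifferentiableAt ℝ (fun w => fderiv ℝ f w 1) ξ :=
    ((contDiff_fderiv_apply hf 1).differentiable (by simp)).differentiableAt
  have hI : DifferentiableAt ℝ (fun w => fderiv ℝ f w Complex.I) ξ :=
    ((contDiff_fderiv_apply hf Complex.I).differentiable (by simp)).differentiableAt
  rw [fderiv_const_mul (h1.fun_add (hI.const_mul Complex.I)) ((1:ℂ)/2)]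
  rw [ContinuousLinearMap.smul_apply]
  rw [fderiv_fun_add h1 (hI.const_mul Complex.I)]
  rw [ContinuousLinearMap.add_apply]
  rw [fderiv_const_mul hI Complex.I, ContinuousLinearMap.smul_apply]
  simp [smul_eq_mul]

lemma fderiv_wD {f : ℂ → ℂ} (hf : ContDiff ℝ (⊤ : ℕ∞) f) (ξ v : ℂ) :
    fderiv ℝ (wD f) ξ v
      = (1 / 2 : ℂ) * (fderiv ℝ (fun w => fderiv ℝ f w 1) ξ v
          - Complex.I * fderiv ℝ (fun w => fderiv ℝ f w Complex.I) ξ v) := by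
  unfold wD
  have h1 : DifferentiableAt ℝ (fun w => fderiv ℝ f w 1) ξ :=
    ((contDiff_fderiv_apply hf 1).differentiable (by simp)).differentiableAt
  have hI : DifferentiableAt ℝ (fun w => fderiv ℝ f w Complex.I) ξ :=
    ((contDiff_fderiv_apply hf Complex.I).differentiable (by simp)).differentiableAt
  rw [fderiv_const_mul (h1.fun_sub (hI.const_mul Complex.I)) ((1:ℂ)/2)]
  rw [ContinuousLinearMap.smul_apply]
  rw [fderiv_fun_sub h1 (hI.const_mul Complex.I)]
  rw [ContinuousLinearMap.sub_apply]
  rw [fderiv_const_mul hI Complex.I, ContinuousLinearMap.smul_apply]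
  simp [smul_eq_mul]

lemma wD_wDbar_comm {f : ℂ → ℂ} (hf : ContDiff ℝ (⊤ : ℕ∞) f) (ξ : ℂ) :
    wD (wDbar f) ξ = wDbar (wD f) ξ := by
  have e1 : wD (wDbar f) ξ = (1 / 2 : ℂ) * (fderiv ℝ (wDbar f) ξ 1 - Complex.I * fderiv ℝ (wDbar f) ξ Complex.I) := rfl
  have e2 : wDbar (wD f) ξ = (1 / 2 : ℂ) * (fderiv ℝ (wD f) ξ 1 + Complex.I * fderiv ℝ (wD f) ξ Complex.I) := rfl
  rw [e1, e2, fderiv_wDbar hf, fderiv_wDbar hf, fderiv_wD hf, fderiv_wD hf,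
    fderiv2_symm hf ξ 1 Complex.I]
  ring

end comm

section slices
variable {Φ : ℝ × ℂ → ℂ}

lemma slice2_hasFDerivAt (hΦ : ContDiff ℝ (⊤ : ℕ∞) Φ) (t : ℝ) (ξ : ℂ) :
    HasFDerivAt (fun w => Φ (t, w))
      ((fderiv ℝ Φ (t, ξ)).comp (((0 : ℂ →L[ℝ] ℝ)).prod (ContinuousLinearMap.id ℝ ℂ))) ξ := by
  have hp : HasFDerivAt (fun w : ℂ => ((t : ℝ), w))
      (((0 : ℂ →L[ℝ] ℝ)).prod (ContinuousLinearMap.id ℝ ℂ)) ξ :=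
    HasFDerivAt.prodMk (hasFDerivAt_const t ξ) (hasFDerivAt_id ξ)
  exact ((hΦ.differentiable (by simp) (t, ξ)).hasFDerivAt).comp ξ hp

lemma slice2_fderiv (hΦ : ContDiff ℝ (⊤ : ℕ∞) Φ) (t : ℝ) (ξ v : ℂ) :
    fderiv ℝ (fun w => Φ (t, w)) ξ v = fderiv ℝ Φ (t, ξ) (0, v) := by
  rw [(slice2_hasFDerivAt hΦ t ξ).fderiv]
  rfl

lemma slice1_hasDerivAt (hΦ : ContDiff ℝ (⊤ : ℕ∞) Φ) (t : ℝ) (ξ : ℂ) :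
    HasDerivAt (fun s => Φ (s, ξ)) (fderiv ℝ Φ (t, ξ) (1, 0)) t := by
  have hp : HasFDerivAt (fun s : ℝ => (s, ξ))
      ((ContinuousLinearMap.id ℝ ℝ).prod (0 : ℝ →L[ℝ] ℂ)) t :=
    HasFDerivAt.prodMk (hasFDerivAt_id t) (hasFDerivAt_const ξ t)
  have := (((hΦ.differentiable (by simp) (t, ξ)).hasFDerivAt).comp t hp).hasDerivAt
  simpa [Function.comp_def] using this

lemma slice2_contDiff (hΦ : ContDiff ℝ (⊤ : ℕ∞) Φ) (t : ℝ) :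
    ContDiff ℝ (⊤ : ℕ∞) (fun w => Φ (t, w)) :=
  hΦ.comp (contDiff_const.prodMk contDiff_id)

lemma mixed_interchange (hΦ : ContDiff ℝ (⊤ : ℕ∞) Φ) (v : ℂ) (t : ℝ) (ξ : ℂ) :
    HasDerivAt (fun s => fderiv ℝ (fun w => Φ (s, w)) ξ v)
      (fderiv ℝ (fun w => deriv (fun s => Φ (s, w)) t) ξ v) t := by
  set G : ℝ × ℂ → ℂ := fun p => fderiv ℝ Φ p (0, v) with hGdef
  set H : ℝ × ℂ → ℂ := fun p => fderiv ℝ Φ p (1, 0) with hHdef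
  have hG : ContDiff ℝ (⊤ : ℕ∞) G := contDiff_fderiv_apply hΦ (0, v)
  have hH : ContDiff ℝ (⊤ : ℕ∞) H := contDiff_fderiv_apply hΦ (1, 0)
  have hfun1 : (fun s => fderiv ℝ (fun w => Φ (s, w)) ξ v) = fun s => G (s, ξ) := by
    funext s; exact slice2_fderiv hΦ s ξ v
  have hfun2 : (fun w => deriv (fun s => Φ (s, w)) t) = fun w => H (t, w) := by
    funext w; exact (slice1_hasDerivAt hΦ t w).deriv
  rw [hfun1, hfun2]
  have hkey : fderiv ℝ G (t, ξ) (1, 0) = fderiv ℝ (fun w => H (t, w)) ξ v := by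
    rw [slice2_fderiv hH t ξ v, hGdef, hHdef]
    rw [fderiv_fderiv_apply hΦ, fderiv_fderiv_apply hΦ]
    exact (hΦ.contDiffAt.isSymmSndFDerivAt (by rw [minSmoothness_of_isRCLikeNormedField]; exact WithTop.coe_le_coe.mpr le_top)) (1, 0) (0, v)
  rw [← hkey]
  exact slice1_hasDerivAt hG t ξ

end slices

section timederiv
variable {r : ℝ → ℂ → ℝ}

lemma deriv_slice_eq (hr : ContDiff ℝ (⊤ : ℕ∞) fun p : ℝ × ℂ => r p.1 p.2) (w : ℂ) (t : ℝ) :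
    deriv (fun s => ((r s w : ℝ) : ℂ)) t = ((deriv (fun s => r s w) t : ℝ) : ℂ) := by
  have hg : DifferentiableAt ℝ (fun s => r s w) t := by
    have := ((hr.differentiable (by simp)) (t, w)).comp t
      ((show DifferentiableAt ℝ (fun s : ℝ => (s, w)) t from differentiableAt_fun_id.prodMk (differentiableAt_const w)))
    exact this
  exact hg.hasDerivAt.ofReal_comp.deriv

lemma hasDerivAt_wDbar_time (hr : ContDiff ℝ (⊤ : ℕ∞) fun p : ℝ × ℂ => r p.1 p.2) (t : ℝ) (ξ : ℂ) :
    HasDerivAt (fun s => wDbar (fun w => ((r s w : ℝ) : ℂ)) ξ)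
      (wDbar (fun w => ((deriv (fun s => r s w) t : ℝ) : ℂ)) ξ) t := by
  have hΦ : ContDiff ℝ (⊤ : ℕ∞) (fun p : ℝ × ℂ => ((r p.1 p.2 : ℝ) : ℂ)) :=
    Complex.ofRealCLM.contDiff.comp hr
  have hveq : (fun w => deriv (fun s => ((r s w : ℝ) : ℂ)) t)
      = (fun w => ((deriv (fun s => r s w) t : ℝ) : ℂ)) := funext fun w => deriv_slice_eq hr w t
  have h1 : HasDerivAt (fun s => fderiv ℝ (fun w => ((r s w : ℝ) : ℂ)) ξ 1)
      (fderiv ℝ (fun w => ((deriv (fun s => r s w) t : ℝ) : ℂ)) ξ 1) t := by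
    have := mixed_interchange hΦ 1 t ξ
    rw [show (fun w => deriv (fun s => (fun p : ℝ × ℂ => ((r p.1 p.2 : ℝ) : ℂ)) (s, w)) t)
        = (fun w => ((deriv (fun s => r s w) t : ℝ) : ℂ)) from hveq] at this
    exact this
  have hI : HasDerivAt (fun s => fderiv ℝ (fun w => ((r s w : ℝ) : ℂ)) ξ Complex.I)
      (fderiv ℝ (fun w => ((deriv (fun s => r s w) t : ℝ) : ℂ)) ξ Complex.I) t := by
    have := mixed_interchange hΦ Complex.I t ξ
    rw [show (fun w => deriv (fun s => (fun p : ℝ × ℂ => ((r p.1 p.2 : ℝ) : ℂ)) (s, w)) t)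
        = (fun w => ((deriv (fun s => r s w) t : ℝ) : ℂ)) from hveq] at this
    exact this
  have := (h1.add (hI.const_mul Complex.I)).const_mul ((1 : ℂ) / 2)
  simpa [wDbar] using this

lemma hasDerivAt_wD_time (hr : ContDiff ℝ (⊤ : ℕ∞) fun p : ℝ × ℂ => r p.1 p.2) (t : ℝ) (ξ : ℂ) :
    HasDerivAt (fun s => wD (fun w => ((r s w : ℝ) : ℂ)) ξ)
      (wD (fun w => ((deriv (fun s => r s w) t : ℝ) : ℂ)) ξ) t := by
  have hΦ : ContDiff ℝ (⊤ : ℕ∞) (fun p : ℝ × ℂ => ((r p.1 p.2 : ℝ) : ℂ)) :=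
    Complex.ofRealCLM.contDiff.comp hr
  have hveq : (fun w => deriv (fun s => ((r s w : ℝ) : ℂ)) t)
      = (fun w => ((deriv (fun s => r s w) t : ℝ) : ℂ)) := funext fun w => deriv_slice_eq hr w t
  have h1 : HasDerivAt (fun s => fderiv ℝ (fun w => ((r s w : ℝ) : ℂ)) ξ 1)
      (fderiv ℝ (fun w => ((deriv (fun s => r s w) t : ℝ) : ℂ)) ξ 1) t := by
    have := mixed_interchange hΦ 1 t ξ
    rw [show (fun w => deriv (fun s => (fun p : ℝ × ℂ => ((r p.1 p.2 : ℝ) : ℂ)) (s, w)) t)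
        = (fun w => ((deriv (fun s => r s w) t : ℝ) : ℂ)) from hveq] at this
    exact this
  have hI : HasDerivAt (fun s => fderiv ℝ (fun w => ((r s w : ℝ) : ℂ)) ξ Complex.I)
      (fderiv ℝ (fun w => ((deriv (fun s => r s w) t : ℝ) : ℂ)) ξ Complex.I) t := by
    have := mixed_interchange hΦ Complex.I t ξ
    rw [show (fun w => deriv (fun s => (fun p : ℝ × ℂ => ((r p.1 p.2 : ℝ) : ℂ)) (s, w)) t)
        = (fun w => ((deriv (fun s => r s w) t : ℝ) : ℂ)) from hveq] at this
    exact this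
  have := (h1.sub (hI.const_mul Complex.I)).const_mul ((1 : ℂ) / 2)
  simpa [wD] using this

end timederiv


/-- (Proposition 1, second equation.) If the support function evolves by `∂r/∂t = Δr + 2r`,
with `F = ½(1+|ξ|²)² ∂̄r`, `χ² = 4|F|²/(1+|ξ|²)²`, `ρ = ½Δr` and `σ = −conj(∂̄F)`, then the
squared perpendicular distance of the normal lines evolves by
`∂(χ²)/∂t − Δ(χ²) = 2χ² − 4(ρ² + |σ|²)`. -/
theorem stmt10 (r : ℝ → ℂ → ℝ) (hr : ContDiff ℝ (⊤ : ℕ∞) fun p : ℝ × ℂ => r p.1 p.2)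
    (hflow : ∀ (t : ℝ) (ξ : ℂ),
      (deriv (fun s => r s ξ) t : ℂ) = sphLap (fun w => (r t w : ℂ)) ξ + 2 * (r t ξ : ℂ))
    (F : ℝ → ℂ → ℂ)
    (hF : ∀ t ξ, F t ξ = (1 / 2) * (1 + (normSq ξ : ℂ)) ^ 2 * wDbar (fun w => (r t w : ℂ)) ξ)
    (chiSq : ℝ → ℂ → ℝ)
    (hchi : ∀ t ξ, chiSq t ξ = 4 * normSq (F t ξ) / (1 + normSq ξ) ^ 2)
    (ρ : ℝ → ℂ → ℂ)
    (hrho : ∀ t ξ, ρ t ξ = (1 / 2) * sphLap (fun w => (r t w : ℂ)) ξ)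
    (σ : ℝ → ℂ → ℂ)
    (hsigma : ∀ (t : ℝ) (ξ : ℂ), σ t ξ = -(starRingEnd ℂ) (wDbar (F t) ξ)) :
    ∀ (t : ℝ) (ξ : ℂ),
      (deriv (fun s => chiSq s ξ) t : ℂ) - sphLap (fun w => (chiSq t w : ℂ)) ξ
        = 2 * (chiSq t ξ : ℂ) - 4 * ((ρ t ξ) ^ 2 + (normSq (σ t ξ) : ℂ)) := by
  intro t ξ
  have hR : ContDiff ℝ (⊤ : ℕ∞) (fun p : ℝ × ℂ => ((r p.1 p.2 : ℝ) : ℂ)) :=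
    Complex.ofRealCLM.contDiff.comp hr
  -- differentiability of real slices
  have hrs : ∀ (s : ℝ) (w : ℂ), DifferentiableAt ℝ (fun z : ℂ => r s z) w := fun s w =>
    ((hr.differentiable (by simp)) (s, w)).comp w ((differentiableAt_const s).prodMk differentiableAt_fun_id)
  -- the spatial function at time t and its derivatives
  set u : ℂ → ℂ := fun w => ((r t w : ℝ) : ℂ) with hu_def
  have hu : ContDiff ℝ (⊤ : ℕ∞) u := slice2_contDiff hR t
  set A : ℂ → ℂ := wD u with hA_def
  set B : ℂ → ℂ := wDbar u with hB_def
  have hA : ContDiff ℝ (⊤ : ℕ∞) A := contDiff_wD hu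
  have hB : ContDiff ℝ (⊤ : ℕ∞) B := contDiff_wDbar hu
  set mf : ℂ → ℂ := wD B with hm_def
  set qf : ℂ → ℂ := wDbar B with hq_def
  set pf : ℂ → ℂ := wD A with hp_def
  have hmf : ContDiff ℝ (⊤ : ℕ∞) mf := contDiff_wD hB
  have hqf : ContDiff ℝ (⊤ : ℕ∞) qf := contDiff_wDbar hB
  have du : ∀ z, DifferentiableAt ℝ u z := fun z => (hu.differentiable (by simp)).differentiableAt
  have dA : ∀ z, DifferentiableAt ℝ A z := fun z => (hA.differentiable (by simp)).differentiableAt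
  have dB : ∀ z, DifferentiableAt ℝ B z := fun z => (hB.differentiable (by simp)).differentiableAt
  have dm : ∀ z, DifferentiableAt ℝ mf z := fun z => (hmf.differentiable (by simp)).differentiableAt
  have dq : ∀ z, DifferentiableAt ℝ qf z := fun z => (hqf.differentiable (by simp)).differentiableAt
  -- the conformal factor
  set P : ℂ → ℂ := fun w => 1 + (normSq w : ℂ) with hP_def
  have hcj : ContDiff ℝ (⊤ : ℕ∞) (fun w : ℂ => (starRingEnd ℂ) w) :=
    Complex.conjCLE.toContinuousLinearMap.contDiff
  have hPc : P = fun w => 1 + w * (starRingEnd ℂ) w := by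
    funext w; rw [hP_def]; rw [Complex.mul_conj]
  have hP : ContDiff ℝ (⊤ : ℕ∞) P := by rw [hPc]; exact contDiff_const.add (contDiff_id.mul hcj)
  have dP : ∀ z, DifferentiableAt ℝ P z := fun z => (hP.differentiable (by simp)).differentiableAt
  have hPne : ∀ w : ℂ, P w ≠ 0 := by
    intro w
    have h1 : (0:ℝ) < 1 + normSq w := by have := normSq_nonneg w; linarith
    have h2 : P w = ((1 + normSq w : ℝ) : ℂ) := by rw [hP_def]; push_cast; ring
    rw [h2]
    exact Complex.ofReal_ne_zero.mpr (ne_of_gt h1)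
  have hPconj : ∀ w, (starRingEnd ℂ) (P w) = P w := by
    intro w; rw [hP_def]; simp [Complex.conj_ofReal]
  have dcj : ∀ z : ℂ, DifferentiableAt ℝ (fun w : ℂ => (starRingEnd ℂ) w) z := fun z =>
    (hcj.differentiable (by simp)).differentiableAt
  have hPwD : ∀ z, wD P z = (starRingEnd ℂ) z := by
    intro z
    rw [hPc, wD_add (differentiableAt_const 1) (differentiableAt_fun_id.fun_mul (dcj z)), wD_const,
      wD_mul differentiableAt_fun_id (dcj z), wD_id, wD_conj differentiableAt_fun_id, wDbar_id]
    simp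
  have hPwDbar : ∀ z, wDbar P z = z := by
    intro z
    rw [hPc, wDbar_add (differentiableAt_const 1) (differentiableAt_fun_id.fun_mul (dcj z)), wDbar_const,
      wDbar_mul differentiableAt_fun_id (dcj z), wDbar_id, wDbar_conj differentiableAt_fun_id, wD_id]
    simp
  -- conjugation facts
  have hABc : ∀ w, (starRingEnd ℂ) (B w) = A w := fun w => conj_wDbar_real _ (hrs t w)
  have hqp : (starRingEnd ℂ) (qf ξ) = pf ξ := by
    have h1 : wD (fun w => (starRingEnd ℂ) (B w)) ξ = (starRingEnd ℂ) (wDbar B ξ) := wD_conj (dB ξ)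
    rw [show (fun w => (starRingEnd ℂ) (B w)) = A from funext hABc] at h1
    exact h1.symm
  -- pointwise complexification of chiSq
  have hchiC : ∀ (s : ℝ) (w : ℂ), ((chiSq s w : ℝ) : ℂ)
      = P w * (P w * (wD (fun z => ((r s z : ℝ) : ℂ)) w * wDbar (fun z => ((r s z : ℝ) : ℂ)) w)) := by
    intro s w
    rw [hchi s w]
    have hns : ((normSq (F s w) : ℝ) : ℂ) = F s w * (starRingEnd ℂ) (F s w) :=
      (Complex.mul_conj _).symm
    have hcF : (starRingEnd ℂ) (F s w)
        = (1 / 2) * (1 + (normSq w : ℂ)) ^ 2 * wD (fun z => ((r s z : ℝ) : ℂ)) w := by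
      rw [hF s w, map_mul, conj_wDbar_real _ (hrs s w)]
      congr 1
      rw [map_mul, map_pow, map_add, map_one, Complex.conj_ofReal, map_div₀, map_one, map_ofNat]
    have hcast : ((4 * normSq (F s w) / (1 + normSq w) ^ 2 : ℝ) : ℂ)
        = 4 * ((normSq (F s w) : ℝ) : ℂ) / (1 + (normSq w : ℂ)) ^ 2 := by
      push_cast; ring
    rw [hcast, hns, hcF, hF s w]
    have hPw : P w = 1 + (normSq w : ℂ) := by rw [hP_def]
    rw [← hPw]
    have := hPne w
    field_simp
    ring
  -- Laplacian of chiSq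
  have hXeq : (fun w => ((chiSq t w : ℝ) : ℂ)) = fun w => P w * (P w * (A w * B w)) :=
    funext fun w => hchiC t w
  have hT : wDbar (fun w => P w * (P w * (A w * B w)))
      = fun w => P w * w * (A w * B w) * 2 + P w * P w * (mf w * B w + A w * qf w) := by
    funext w
    rw [wDbar_mul (dP w) ((dP w).fun_mul ((dA w).fun_mul (dB w))),
        wDbar_mul (dP w) ((dA w).fun_mul (dB w)),
        wDbar_mul (dA w) (dB w), hPwDbar w]
    rw [show wDbar A w = mf w from (wD_wDbar_comm hu w).symm]
    rw [show wDbar B w = qf w from rfl]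
    ring
  -- value abbreviations
  set a : ℂ := A ξ with ha_def
  set b : ℂ := B ξ with hb_def
  set m : ℂ := mf ξ with hm2_def
  set p : ℂ := pf ξ with hp2_def
  set q : ℂ := qf ξ with hq2_def
  set Mv : ℂ := wD mf ξ with hM2_def
  set Nv : ℂ := wD qf ξ with hN2_def
  set φ : ℂ := P ξ with hφ_def
  -- expansion of the Laplacian of chiSq
  have hwDT : wD (fun w => P w * w * (A w * B w) * 2 + P w * P w * (mf w * B w + A w * qf w)) ξ
      = (((starRingEnd ℂ) ξ * ξ + φ) * (a * b) + φ * ξ * (p * b + a * m)) * 2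
        + ((starRingEnd ℂ) ξ * φ + φ * (starRingEnd ℂ) ξ) * (m * b + a * q)
        + φ * φ * ((Mv * b + m * m) + (p * q + a * Nv)) := by
    rw [wD_add ((((dP ξ).fun_mul differentiableAt_fun_id).fun_mul ((dA ξ).fun_mul (dB ξ))).fun_mul
          (differentiableAt_const 2))
        (((dP ξ).fun_mul (dP ξ)).fun_mul (((dm ξ).fun_mul (dB ξ)).fun_add ((dA ξ).fun_mul (dq ξ)))),
      wD_mul (((dP ξ).fun_mul differentiableAt_fun_id).fun_mul ((dA ξ).fun_mul (dB ξ)))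
        (differentiableAt_const 2), wD_const,
      wD_mul ((dP ξ).fun_mul differentiableAt_fun_id) ((dA ξ).fun_mul (dB ξ)),
      wD_mul (dP ξ) differentiableAt_fun_id, wD_id, hPwD ξ,
      wD_mul (dA ξ) (dB ξ),
      wD_mul ((dP ξ).fun_mul (dP ξ)) (((dm ξ).fun_mul (dB ξ)).fun_add ((dA ξ).fun_mul (dq ξ))),
      wD_mul (dP ξ) (dP ξ),
      wD_add ((dm ξ).fun_mul (dB ξ)) ((dA ξ).fun_mul (dq ξ)),
      wD_mul (dm ξ) (dB ξ), wD_mul (dA ξ) (dq ξ), hPwD ξ]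
    rw [show wD A ξ = p from rfl, show wD B ξ = m from rfl, show wD mf ξ = Mv from rfl,
      show wD qf ξ = Nv from rfl, show P ξ = φ from rfl, show A ξ = a from rfl,
      show B ξ = b from rfl, show mf ξ = m from rfl, show qf ξ = q from rfl]
    ring
  have hLap : sphLap (fun w => ((chiSq t w : ℝ) : ℂ)) ξ
      = φ * φ * (wD (fun w => P w * w * (A w * B w) * 2
          + P w * P w * (mf w * B w + A w * qf w)) ξ) := by
    show (1 + (normSq ξ : ℂ)) ^ 2 * wD (wDbar (fun w => ((chiSq t w : ℝ) : ℂ))) ξ = _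
    rw [hXeq, hT, show ((1 : ℂ) + (normSq ξ : ℂ)) = φ from rfl]
    ring
  -- the time-derivative function
  set v : ℂ → ℂ := fun w => ((deriv (fun s => r s w) t : ℝ) : ℂ) with hv_def
  have hveq : v = fun w => P w * P w * mf w + 2 * u w := by
    funext w
    show ((deriv (fun s => r s w) t : ℝ) : ℂ) = _
    rw [← deriv_slice_eq hr w t, hflow t w]
    show (1 + (normSq w : ℂ)) ^ 2 * wD (wDbar u) w + 2 * u w = _
    rw [show ((1 : ℂ) + (normSq w : ℂ)) = P w from rfl, show wD (wDbar u) w = mf w from rfl]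
    ring
  have hat : HasDerivAt (fun s => wD (fun w => ((r s w : ℝ) : ℂ)) ξ) (wD v ξ) t :=
    hasDerivAt_wD_time hr t ξ
  have hbt : HasDerivAt (fun s => wDbar (fun w => ((r s w : ℝ) : ℂ)) ξ) (wDbar v ξ) t :=
    hasDerivAt_wDbar_time hr t ξ
  have hwDv : wD v ξ = ((starRingEnd ℂ) ξ * φ + φ * (starRingEnd ℂ) ξ) * m + φ * φ * Mv + 2 * a := by
    rw [hveq, wD_add (((dP ξ).fun_mul (dP ξ)).fun_mul (dm ξ)) ((differentiableAt_const 2).fun_mul (du ξ)),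
      wD_mul ((dP ξ).fun_mul (dP ξ)) (dm ξ), wD_mul (dP ξ) (dP ξ), hPwD ξ,
      wD_mul (differentiableAt_const 2) (du ξ), wD_const]
    rw [show wD mf ξ = Mv from rfl, show wD u ξ = a from rfl, show P ξ = φ from rfl,
      show mf ξ = m from rfl, show u ξ = ((r t ξ : ℝ) : ℂ) from rfl]
    ring
  have hwDbarv : wDbar v ξ = (ξ * φ + φ * ξ) * m + φ * φ * Nv + 2 * b := by
    rw [hveq, wDbar_add (((dP ξ).fun_mul (dP ξ)).fun_mul (dm ξ)) ((differentiableAt_const 2).fun_mul (du ξ)),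
      wDbar_mul ((dP ξ).fun_mul (dP ξ)) (dm ξ), wDbar_mul (dP ξ) (dP ξ), hPwDbar ξ,
      wDbar_mul (differentiableAt_const 2) (du ξ), wDbar_const]
    rw [show wDbar mf ξ = Nv from (wD_wDbar_comm hB ξ).symm, show wDbar u ξ = b from rfl,
      show P ξ = φ from rfl, show mf ξ = m from rfl,
      show u ξ = ((r t ξ : ℝ) : ℂ) from rfl]
    ring
  -- the time derivative of chiSq
  have hchit : HasDerivAt
      (fun s => φ * (φ * (wD (fun w => ((r s w : ℝ) : ℂ)) ξ * wDbar (fun w => ((r s w : ℝ) : ℂ)) ξ)))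
      (φ * (φ * (wD v ξ * b + a * wDbar v ξ))) t := ((hat.mul hbt).const_mul φ).const_mul φ
  have hfun : (fun s => ((chiSq s ξ : ℝ) : ℂ))
      = (fun s => φ * (φ * (wD (fun w => ((r s w : ℝ) : ℂ)) ξ
          * wDbar (fun w => ((r s w : ℝ) : ℂ)) ξ))) := funext fun s => hchiC s ξ
  have hchit2 : HasDerivAt (fun s => ((chiSq s ξ : ℝ) : ℂ))
      (φ * (φ * (wD v ξ * b + a * wDbar v ξ))) t := by rw [hfun]; exact hchit
  have hderiv : deriv (fun s => ((chiSq s ξ : ℝ) : ℂ)) t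
      = φ * (φ * (wD v ξ * b + a * wDbar v ξ)) := hchit2.deriv
  -- rho
  have hrhoval : ρ t ξ = 1 / 2 * (φ ^ 2 * m) := by
    rw [hrho t ξ]
    rw [show sphLap (fun w => ((r t w : ℝ) : ℂ)) ξ = φ ^ 2 * m from rfl]
  -- sigma
  have hFfun : F t = fun w => 1 / 2 * (P w * (P w * B w)) := by
    funext w
    rw [hF t w]
    show (1 / 2 : ℂ) * (P w) ^ 2 * B w = _
    ring
  have hZ : wDbar (F t) ξ = 1 / 2 * (ξ * (φ * b) + φ * (ξ * b + φ * q)) := by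
    rw [hFfun,
      wDbar_mul (differentiableAt_const ((1 : ℂ) / 2)) ((dP ξ).fun_mul ((dP ξ).fun_mul (dB ξ))),
      wDbar_const, wDbar_mul (dP ξ) ((dP ξ).fun_mul (dB ξ)), wDbar_mul (dP ξ) (dB ξ), hPwDbar ξ]
    rw [show wDbar B ξ = q from rfl, show P ξ = φ from rfl, show B ξ = b from rfl]
    ring
  have hconjZ : (starRingEnd ℂ) (wDbar (F t) ξ)
      = 1 / 2 * ((starRingEnd ℂ) ξ * (φ * a) + φ * ((starRingEnd ℂ) ξ * a + φ * p)) := by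
    rw [hZ]
    simp only [map_mul, map_add, map_div₀, map_one, map_ofNat]
    rw [show (starRingEnd ℂ) φ = φ from hPconj ξ, show (starRingEnd ℂ) b = a from hABc ξ,
      show (starRingEnd ℂ) q = p from hqp]
  have hsigval : ((normSq (σ t ξ) : ℝ) : ℂ) = wDbar (F t) ξ * (starRingEnd ℂ) (wDbar (F t) ξ) := by
    rw [hsigma t ξ, normSq_neg, normSq_conj, ← Complex.mul_conj]
  -- conclusion
  rw [hderiv, hLap, hwDT, hchiC t ξ, hrhoval, hsigval, hconjZ, hZ, hwDv, hwDbarv]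
  rw [show wD (fun z => ((r t z : ℝ) : ℂ)) ξ = a from rfl,
    show wDbar (fun z => ((r t z : ℝ) : ℂ)) ξ = b from rfl,
    show P ξ = φ from rfl,
    show φ = 1 + ξ * (starRingEnd ℂ) ξ from by rw [hφ_def, hPc]]
  ring
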